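/- For every f ∈ F_π, the map a ↦ [a]_f from 𝒪_M to endomorphisms of F_f is an injective ring homomorphism: for all a, b ∈ 𝒪_M one has [a+b]_f(X) = F_f([a]_f(X),[b]_f(X)), [ab]_f = [a]_f ∘ [b]_f, [1]_f(X) = X, and [π]_f = f; injectivity means [a]_f = [b]_f implies a = b. -/

import Mathlib

/-- A finite extension `M` of `ℚ_p` is a `ℤ_p`-algebra via `ℚ_p`. -/
noncomputable instance PadicExt.algebraPadicInt {p : ℕ} [Fact p.Prime] {M : Type*} [Field M]
    [Algebra ℚ_[p] M] : Algebra ℤ_[p] M :=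
  ((algebraMap ℚ_[p] M).comp (algebraMap ℤ_[p] ℚ_[p])).toAlgebra

/-- Substitution of the one-variable power series `f` (with coefficients in `R`) by the
multivariate power series `a` (with coefficients in an `R`-algebra `S`); this gives the
usual composition `f(a)` whenever the constant coefficient of `a` vanishes. -/
noncomputable def PSsubst {R S : Type*} [CommRing R] [CommRing S] [Algebra R S] {σ : Type*}
    (a : MvPowerSeries σ S) (f : PowerSeries R) : MvPowerSeries σ S :=
  fun d => ∑ n ∈ Finset.range (d.sum (fun _ m => m) + 1),
    algebraMap R S (PowerSeries.coeff n f) * MvPowerSeries.coeff d (a ^ n)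

/-- Substitution of the two-variable power series `F` (with coefficients in `R`) by the pair
of multivariate power series `a`, `b`; this gives the usual composition `F(a,b)` whenever the
constant coefficients of `a` and `b` vanish. -/
noncomputable def MvSubst2 {R S : Type*} [CommRing R] [CommRing S] [Algebra R S] {σ : Type*}
    (a b : MvPowerSeries σ S) (F : MvPowerSeries (Fin 2) R) : MvPowerSeries σ S :=
  fun d => ∑ mn ∈ Finset.range (d.sum (fun _ m => m) + 1) ×ˢ
      Finset.range (d.sum (fun _ m => m) + 1),
    algebraMap R S (MvPowerSeries.coeff (Finsupp.single 0 mn.1 + Finsupp.single 1 mn.2) F) *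
      MvPowerSeries.coeff d (a ^ mn.1 * b ^ mn.2)

/-- `F ∈ R⟦X,Y⟧` is a one-dimensional commutative formal group law:
`F(X,Y) ≡ X + Y mod degree 2`, `F(X,F(Y,Z)) = F(F(X,Y),Z)` and `F(X,Y) = F(Y,X)`. -/
def IsFormalGroupLaw {R : Type*} [CommRing R] (F : MvPowerSeries (Fin 2) R) : Prop :=
  MvPowerSeries.constantCoeff F = 0 ∧
  MvPowerSeries.coeff (Finsupp.single 0 1) F = 1 ∧
  MvPowerSeries.coeff (Finsupp.single 1 1) F = 1 ∧
  MvSubst2 (MvPowerSeries.X 0) (MvSubst2 (MvPowerSeries.X 1) (MvPowerSeries.X 2) F) F =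
    MvSubst2 (MvSubst2 (MvPowerSeries.X 0 : MvPowerSeries (Fin 3) R) (MvPowerSeries.X 1) F)
      (MvPowerSeries.X 2) F ∧
  MvSubst2 (MvPowerSeries.X 1 : MvPowerSeries (Fin 2) R) (MvPowerSeries.X 0) F = F

/-- `h ∈ R⟦X⟧` (with `h(0) = 0`) is an endomorphism of the formal group law `F`:
`h(F(X,Y)) = F(h(X),h(Y))`. -/
def IsEndoOf {R : Type*} [CommRing R] (f : PowerSeries R) (F : MvPowerSeries (Fin 2) R) : Prop :=
  PSsubst F f =
    MvSubst2 (PSsubst (MvPowerSeries.X 0) f) (PSsubst (MvPowerSeries.X 1) f) F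

/-- `f` belongs to the Lubin-Tate set `F_π`: `f ≡ πX mod degree 2` and `f ≡ X^q mod 𝔪` where
`𝔪` is the maximal ideal. -/
def IsLubinTateSeries {R : Type*} [CommRing R] (𝔪 : Ideal R) (π : R) (q : ℕ)
    (f : PowerSeries R) : Prop :=
  PowerSeries.constantCoeff f = 0 ∧ PowerSeries.coeff 1 f = π ∧
  ∀ n : ℕ, PowerSeries.coeff n f - PowerSeries.coeff n (PowerSeries.X ^ q) ∈ 𝔪

/-- `h` satisfies the defining property of the Lubin-Tate endomorphism `[a]_f`:
`h ≡ aX mod degree 2` and `h(f(X)) = f(h(X))`. -/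
def IsLTBracket {R : Type*} [CommRing R] (f : PowerSeries R) (a : R) (h : PowerSeries R) :
    Prop :=
  PowerSeries.constantCoeff h = 0 ∧ PowerSeries.coeff 1 h = a ∧
    PSsubst (f : MvPowerSeries Unit R) h = PSsubst (h : MvPowerSeries Unit R) f


section LT3Aux
open MvPowerSeries Finset
set_option linter.unusedSectionVars false
set_option maxHeartbeats 1000000

namespace LT3
variable {R : Type*} [CommRing R]
variable {σ τ : Type*} [DecidableEq σ] [DecidableEq τ] [Fintype τ]

def wt {σ : Type*} (d : σ →₀ ℕ) : ℕ := d.sum fun _ m => m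

omit [DecidableEq σ] in
lemma wt_add (d e : σ →₀ ℕ) : wt (d + e) = wt d + wt e :=
  Finsupp.sum_add_index' (fun _ => rfl) (fun _ _ _ => rfl)

omit [DecidableEq σ] in
lemma wt_single (i : σ) (n : ℕ) : wt (Finsupp.single i n) = n := by simp [wt]

omit [DecidableEq σ] in
lemma apply_le_wt (d : σ →₀ ℕ) (i : σ) : d i ≤ wt d := by
  by_cases h : i ∈ d.support
  · exact Finset.single_le_sum (fun _ _ => Nat.zero_le _) h
  · simp [Finsupp.notMem_support_iff.mp h]

omit [DecidableEq σ] in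
lemma wt_eq_zero_iff {d : σ →₀ ℕ} : wt d = 0 ↔ d = 0 := by
  constructor
  · intro h; ext i
    have := apply_le_wt d i
    simp only [Finsupp.coe_zero, Pi.zero_apply]
    omega
  · rintro rfl; simp [wt]

omit [DecidableEq τ] in
lemma wt_eq_sum_univ (e : τ →₀ ℕ) : wt e = ∑ i, e i := Finsupp.sum_fintype _ _ (fun _ => rfl)

noncomputable def cbound (τ : Type*) [Fintype τ] (c : ℕ) : τ →₀ ℕ :=
  Finsupp.equivFunOnFinite.symm (fun _ => c)

@[simp] lemma cbound_apply (c : ℕ) (i : τ) : cbound τ c i = c := rfl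

lemma le_cbound {e : τ →₀ ℕ} {c : ℕ} : e ≤ cbound τ c ↔ ∀ i, e i ≤ c := by
  constructor
  · exact fun h i => h i
  · exact fun h i => h i

lemma coeff_pow_eq_zero {a : MvPowerSeries σ R} (ha : constantCoeff a = 0)
    {d : σ →₀ ℕ} {k : ℕ} (h : wt d < k) : coeff d (a ^ k) = 0 := by
  induction k generalizing d with
  | zero => omega
  | succ k ih =>
    rw [pow_succ, coeff_mul]
    refine Finset.sum_eq_zero fun p hp => ?_
    rw [Finset.HasAntidiagonal.mem_antidiagonal] at hp
    rcases eq_or_ne p.2 0 with h2 | h2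
    · have : coeff p.2 a = 0 := by rw [h2]; exact ha
      simp [this]
    · have hw : wt p.1 + wt p.2 = wt d := by rw [← wt_add, hp]
      have h2' : wt p.2 ≠ 0 := fun h0 => h2 (wt_eq_zero_iff.mp h0)
      have : wt p.1 < k := by omega
      rw [ih this, zero_mul]

lemma coeff_pow_mul_pow_eq_zero {a b : MvPowerSeries σ R} (ha : constantCoeff a = 0)
    (hb : constantCoeff b = 0) {d : σ →₀ ℕ} {m n : ℕ} (h : wt d < m + n) :
    coeff d (a ^ m * b ^ n) = 0 := by
  rw [coeff_mul]
  refine Finset.sum_eq_zero fun p hp => ?_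
  rw [Finset.HasAntidiagonal.mem_antidiagonal] at hp
  have hw : wt p.1 + wt p.2 = wt d := by rw [← wt_add, hp]
  rcases lt_or_ge (wt p.1) m with h1 | h1
  · rw [coeff_pow_eq_zero ha h1, zero_mul]
  · rw [coeff_pow_eq_zero hb (by omega), mul_zero]

lemma coeff_prod_pow_eq_zero_aux {s : τ → MvPowerSeries σ R}
    (hs : ∀ i, constantCoeff (s i) = 0) (A : Finset τ) (e : τ →₀ ℕ) {d : σ →₀ ℕ}
    (h : wt d < ∑ i ∈ A, e i) : coeff d (∏ i ∈ A, s i ^ e i) = 0 := by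
  induction A using Finset.cons_induction generalizing d with
  | empty => simp at h
  | cons j A hj ih =>
    rw [Finset.prod_cons, coeff_mul]
    rw [Finset.sum_cons] at h
    refine Finset.sum_eq_zero fun p hp => ?_
    rw [Finset.HasAntidiagonal.mem_antidiagonal] at hp
    have hw : wt p.1 + wt p.2 = wt d := by rw [← wt_add, hp]
    rcases lt_or_ge (wt p.1) (e j) with h1 | h1
    · rw [coeff_pow_eq_zero (hs j) h1, zero_mul]
    · rw [ih (d := p.2) (by omega), mul_zero]

lemma coeff_prod_pow_eq_zero {s : τ → MvPowerSeries σ R}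
    (hs : ∀ i, constantCoeff (s i) = 0) {e : τ →₀ ℕ} {d : σ →₀ ℕ}
    (h : wt d < wt e) : coeff d (∏ i, s i ^ e i) = 0 :=
  coeff_prod_pow_eq_zero_aux hs _ e (by rwa [← wt_eq_sum_univ])

noncomputable def SubstAux (s : τ → MvPowerSeries σ R) (F : MvPowerSeries τ R) :
    MvPowerSeries σ R :=
  fun d => ∑ e ∈ Finset.Iic (cbound τ (wt d)), coeff e F * coeff d (∏ i, s i ^ e i)

lemma coeff_SubstAux (s : τ → MvPowerSeries σ R) (F : MvPowerSeries τ R) (d : σ →₀ ℕ) :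
    coeff d (SubstAux s F) =
      ∑ e ∈ Finset.Iic (cbound τ (wt d)), coeff e F * coeff d (∏ i, s i ^ e i) := rfl

lemma coeff_SubstAux_eq {s : τ → MvPowerSeries σ R} (hs : ∀ i, constantCoeff (s i) = 0)
    (F : MvPowerSeries τ R) {d : σ →₀ ℕ} {N : ℕ} (hN : wt d ≤ N) :
    coeff d (SubstAux s F) =
      ∑ e ∈ Finset.Iic (cbound τ N), coeff e F * coeff d (∏ i, s i ^ e i) := by
  rw [coeff_SubstAux]
  refine Finset.sum_subset ?_ ?_
  · intro e he
    rw [Finset.mem_Iic] at he ⊢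
    exact le_trans he (le_cbound.mpr fun i => hN)
  · intro e _ he
    rw [Finset.mem_Iic, le_cbound] at he
    push_neg at he
    obtain ⟨i, hi⟩ := he
    have : wt d < wt e := lt_of_lt_of_le hi (apply_le_wt e i)
    rw [coeff_prod_pow_eq_zero hs this, mul_zero]


-- NEW MATERIAL
lemma sum_Iic_antidiagonal {M : Type*} [AddCommMonoid M] (B : τ →₀ ℕ)
    (T : (τ →₀ ℕ) × (τ →₀ ℕ) → M) :
    ∑ e ∈ Finset.Iic B, ∑ uv ∈ Finset.HasAntidiagonal.antidiagonal e, T uv =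
      ∑ uv ∈ (Finset.Iic B ×ˢ Finset.Iic B).filter (fun uv => uv.1 + uv.2 ≤ B), T uv := by
  rw [show (∑ e ∈ Finset.Iic B, ∑ uv ∈ Finset.HasAntidiagonal.antidiagonal e, T uv) =
      ∑ x ∈ (Finset.Iic B).sigma (fun e => Finset.HasAntidiagonal.antidiagonal e), T x.2 from
    (Finset.sum_sigma (Finset.Iic B) (fun e => Finset.HasAntidiagonal.antidiagonal e) (fun x => T x.2)).symm]
  refine Finset.sum_nbij' (fun x => x.2) (fun uv => ⟨uv.1 + uv.2, uv⟩) ?_ ?_ ?_ ?_ ?_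
  · rintro ⟨e, uv⟩ hx
    rw [Finset.mem_sigma, Finset.mem_Iic, Finset.HasAntidiagonal.mem_antidiagonal] at hx
    obtain ⟨he, huv⟩ := hx
    rw [Finset.mem_filter, Finset.mem_product, Finset.mem_Iic, Finset.mem_Iic]
    refine ⟨⟨?_, ?_⟩, by rw [huv]; exact he⟩
    · exact le_trans (le_add_of_nonneg_right zero_le) (huv ▸ he)
    · exact le_trans (le_add_of_nonneg_left zero_le) (huv ▸ he)
  · intro uv huv
    rw [Finset.mem_filter] at huv
    rw [Finset.mem_sigma, Finset.mem_Iic, Finset.HasAntidiagonal.mem_antidiagonal]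
    exact ⟨huv.2, rfl⟩
  · rintro ⟨e, uv⟩ hx
    rw [Finset.mem_sigma, Finset.HasAntidiagonal.mem_antidiagonal] at hx
    exact Sigma.ext (hx.2.symm ▸ rfl) (by simp)
  · intro uv _; rfl
  · intro x _; rfl

lemma SubstAux_mul {s : τ → MvPowerSeries σ R} (hs : ∀ i, constantCoeff (s i) = 0)
    (F G : MvPowerSeries τ R) :
    SubstAux s (F * G) = SubstAux s F * SubstAux s G := by
  ext d
  set B := cbound τ (wt d) with hB
  -- LHS
  rw [coeff_SubstAux]
  have lhs1 : ∀ e ∈ Finset.Iic B, coeff e (F * G) * coeff d (∏ i, s i ^ e i) =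
      ∑ uv ∈ Finset.HasAntidiagonal.antidiagonal e,
        coeff uv.1 F * coeff uv.2 G * coeff d (∏ i, s i ^ (uv.1 + uv.2) i) := by
    intro e _
    rw [coeff_mul, Finset.sum_mul]
    refine Finset.sum_congr rfl fun uv huv => ?_
    rw [Finset.HasAntidiagonal.mem_antidiagonal] at huv
    rw [huv]
  rw [Finset.sum_congr rfl lhs1, sum_Iic_antidiagonal]
  rw [Finset.sum_filter]
  have lhs2 : ∑ uv ∈ Finset.Iic B ×ˢ Finset.Iic B,
      (if uv.1 + uv.2 ≤ B then coeff uv.1 F * coeff uv.2 G *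
        coeff d (∏ i, s i ^ (uv.1 + uv.2) i) else 0) =
      ∑ uv ∈ Finset.Iic B ×ˢ Finset.Iic B, coeff uv.1 F * coeff uv.2 G *
        coeff d (∏ i, s i ^ (uv.1 + uv.2) i) := by
    refine Finset.sum_congr rfl fun uv _ => ?_
    split_ifs with h
    · rfl
    · rw [le_cbound] at h
      push_neg at h
      obtain ⟨i, hi⟩ := h
      have : wt d < wt (uv.1 + uv.2) := lt_of_lt_of_le hi (apply_le_wt _ i)
      rw [coeff_prod_pow_eq_zero hs this, mul_zero]
  rw [lhs2]
  -- RHS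
  rw [coeff_mul]
  have rhs1 : ∀ pq ∈ Finset.HasAntidiagonal.antidiagonal d,
      coeff pq.1 (SubstAux s F) * coeff pq.2 (SubstAux s G) =
      ∑ uv ∈ Finset.Iic B ×ˢ Finset.Iic B, (coeff uv.1 F * coeff pq.1 (∏ i, s i ^ uv.1 i)) *
        (coeff uv.2 G * coeff pq.2 (∏ i, s i ^ uv.2 i)) := by
    intro pq hpq
    rw [Finset.HasAntidiagonal.mem_antidiagonal] at hpq
    have h1 : wt pq.1 ≤ wt d := by have := wt_add pq.1 pq.2; rw [hpq] at this; omega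
    have h2 : wt pq.2 ≤ wt d := by have := wt_add pq.1 pq.2; rw [hpq] at this; omega
    rw [coeff_SubstAux_eq hs F h1, coeff_SubstAux_eq hs G h2, Finset.sum_mul_sum]
    rw [Finset.sum_product]
  rw [Finset.sum_congr rfl rhs1, Finset.sum_comm]
  refine Finset.sum_congr rfl fun uv _ => ?_
  have : ∀ pq ∈ Finset.HasAntidiagonal.antidiagonal d,
      (coeff uv.1 F * coeff pq.1 (∏ i, s i ^ uv.1 i)) *
        (coeff uv.2 G * coeff pq.2 (∏ i, s i ^ uv.2 i)) =
      coeff uv.1 F * coeff uv.2 G *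
        (coeff pq.1 (∏ i, s i ^ uv.1 i) * coeff pq.2 (∏ i, s i ^ uv.2 i)) := by
    intro pq _; ring
  rw [Finset.sum_congr rfl this, ← Finset.mul_sum, ← coeff_mul]
  have hprod : (∏ i, s i ^ (uv.1 + uv.2) i) = (∏ i, s i ^ uv.1 i) * ∏ i, s i ^ uv.2 i := by
    rw [← Finset.prod_mul_distrib]
    exact Finset.prod_congr rfl fun i _ => by rw [← pow_add, Finsupp.add_apply]
  rw [hprod]


-- NEW
lemma SubstAux_one (s : τ → MvPowerSeries σ R) : SubstAux s (1 : MvPowerSeries τ R) = 1 := by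
  ext d
  rw [coeff_SubstAux, Finset.sum_eq_single (0 : τ →₀ ℕ)]
  · simp
  · intro e _ he
    rw [MvPowerSeries.coeff_one, if_neg he, zero_mul]
  · intro h
    exact absurd (Finset.mem_Iic.mpr zero_le) h

lemma SubstAux_pow {s : τ → MvPowerSeries σ R} (hs : ∀ i, constantCoeff (s i) = 0)
    (F : MvPowerSeries τ R) (k : ℕ) : SubstAux s (F ^ k) = (SubstAux s F) ^ k := by
  induction k with
  | zero => rw [pow_zero, pow_zero, SubstAux_one]
  | succ k ih => rw [pow_succ, pow_succ, SubstAux_mul hs, ih]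

lemma SubstAux_prod {ι : Type*} {s : τ → MvPowerSeries σ R}
    (hs : ∀ i, constantCoeff (s i) = 0) (A : Finset ι) (Fi : ι → MvPowerSeries τ R) :
    SubstAux s (∏ i ∈ A, Fi i) = ∏ i ∈ A, SubstAux s (Fi i) := by
  induction A using Finset.cons_induction with
  | empty => simpa using SubstAux_one s
  | cons j A hj ih => rw [Finset.prod_cons, Finset.prod_cons, SubstAux_mul hs, ih]

lemma prod_X_pow_eq_monomial (e : τ →₀ ℕ) :
    (∏ i, (X i : MvPowerSeries τ R) ^ e i) = monomial e 1 := by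
  have h1 : ∀ (i : τ) (k : ℕ), (X i : MvPowerSeries τ R) ^ k = monomial (Finsupp.single i k) 1 := by
    intro i k
    induction k with
    | zero => simp [Finsupp.single_zero]
    | succ k ih =>
      rw [pow_succ, ih, X, monomial_mul_monomial, ← Finsupp.single_add, one_mul]
  calc (∏ i, (X i : MvPowerSeries τ R) ^ e i)
      = ∏ i, monomial (Finsupp.single i (e i)) 1 := by
        exact Finset.prod_congr rfl fun i _ => h1 i (e i)
    _ = monomial (∑ i, Finsupp.single i (e i)) 1 := by
        induction (Finset.univ : Finset τ) using Finset.cons_induction with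
        | empty => simp
        | cons j A hj ih =>
          rw [Finset.prod_cons, Finset.sum_cons, ih, monomial_mul_monomial, one_mul]
    _ = monomial e 1 := by
        have he : (∑ i, Finsupp.single i (e i)) = e := by
          ext j
          rw [Finset.sum_apply']
          rw [Finset.sum_eq_single j (fun i _ hi => Finsupp.single_eq_of_ne' hi)
            (fun h => absurd (Finset.mem_univ j) h)]
          exact Finsupp.single_eq_same
        rw [he]

lemma SubstAux_X_self (F : MvPowerSeries τ R) :
    SubstAux (fun i => (X i : MvPowerSeries τ R)) F = F := by
  ext d
  rw [coeff_SubstAux, Finset.sum_eq_single d]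
  · rw [prod_X_pow_eq_monomial, coeff_monomial, if_pos rfl, mul_one]
  · intro e _ he
    rw [prod_X_pow_eq_monomial, coeff_monomial, if_neg (fun h => he h.symm), mul_zero]
  · intro h
    exact absurd (Finset.mem_Iic.mpr (le_cbound.mpr fun i => apply_le_wt d i)) h

lemma SubstAux_X {s : τ → MvPowerSeries σ R} (hs : ∀ i, constantCoeff (s i) = 0) (i : τ) :
    SubstAux s (X i) = s i := by
  ext d
  rw [coeff_SubstAux]
  rcases Nat.eq_zero_or_pos (wt d) with h0 | hpos
  · have hd : d = 0 := wt_eq_zero_iff.mp h0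
    rw [Finset.sum_eq_single (0 : τ →₀ ℕ)]
    · rw [coeff_X, if_neg (by simp [eq_comm, Finsupp.single_eq_zero]), zero_mul]
      rw [hd, coeff_zero_eq_constantCoeff]
      exact (hs i).symm
    · intro e he hne
      exfalso
      rw [Finset.mem_Iic, le_cbound] at he
      exact hne (Finsupp.ext fun j => by have := he j; rw [h0] at this; simpa using this)
    · intro h; exact absurd (Finset.mem_Iic.mpr zero_le) h
  · rw [Finset.sum_eq_single (Finsupp.single i 1)]
    · rw [coeff_X, if_pos rfl, one_mul]
      congr 1
      rw [Finset.prod_eq_single i (fun j _ hj => by rw [Finsupp.single_eq_of_ne' (Ne.symm hj), pow_zero])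
        (fun h => absurd (Finset.mem_univ i) h)]
      rw [Finsupp.single_eq_same, pow_one]
    · intro e _ hne
      rw [coeff_X, if_neg hne, zero_mul]
    · intro h
      exfalso
      refine h (Finset.mem_Iic.mpr (le_cbound.mpr fun j => ?_))
      rcases eq_or_ne j i with rfl | hj
      · rw [Finsupp.single_eq_same]; omega
      · rw [Finsupp.single_eq_of_ne' (Ne.symm hj)]; omega

lemma SubstAux_assoc {υ : Type*} [DecidableEq υ] [Fintype υ]
    {s : υ → MvPowerSeries σ R} (hs : ∀ j, constantCoeff (s j) = 0)
    {t : τ → MvPowerSeries υ R} (ht : ∀ i, constantCoeff (t i) = 0)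
    (F : MvPowerSeries τ R) :
    SubstAux s (SubstAux t F) = SubstAux (fun i => SubstAux s (t i)) F := by
  ext d
  rw [coeff_SubstAux, coeff_SubstAux]
  have step : ∀ e ∈ Finset.Iic (cbound υ (wt d)),
      coeff e (SubstAux t F) * coeff d (∏ j, s j ^ e j) =
      ∑ g ∈ Finset.Iic (cbound τ (wt d)),
        coeff g F * (coeff e (∏ i, t i ^ g i) * coeff d (∏ j, s j ^ e j)) := by
    intro e _
    rcases le_or_gt (wt e) (wt d) with h | h
    · rw [coeff_SubstAux_eq ht F h, Finset.sum_mul]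
      exact Finset.sum_congr rfl fun g _ => by ring
    · rw [coeff_prod_pow_eq_zero hs h, mul_zero]
      symm
      exact Finset.sum_eq_zero fun g _ => by simp [coeff_prod_pow_eq_zero hs h]
  rw [Finset.sum_congr rfl step, Finset.sum_comm]
  refine Finset.sum_congr rfl fun g _ => ?_
  rw [← Finset.mul_sum]
  congr 1
  have : (∏ i, SubstAux s (t i) ^ g i) = SubstAux s (∏ i, t i ^ g i) := by
    rw [SubstAux_prod hs]
    exact Finset.prod_congr rfl fun i _ => (SubstAux_pow hs _ _).symm
  rw [this, coeff_SubstAux]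


-- NEW: bridges
lemma coeff_PSsubst (a : MvPowerSeries σ R) (f : PowerSeries R) (d : σ →₀ ℕ) :
    coeff d (PSsubst a f) =
      ∑ n ∈ Finset.range (wt d + 1), PowerSeries.coeff n f * coeff d (a ^ n) := by
  simp [PSsubst, coeff, wt, Algebra.algebraMap_self]
  rfl

lemma coeff_MvSubst2 (a b : MvPowerSeries σ R) (F : MvPowerSeries (Fin 2) R) (d : σ →₀ ℕ) :
    coeff d (MvSubst2 a b F) =
      ∑ mn ∈ Finset.range (wt d + 1) ×ˢ Finset.range (wt d + 1),
        coeff (Finsupp.single 0 mn.1 + Finsupp.single 1 mn.2) F *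
          coeff d (a ^ mn.1 * b ^ mn.2) := by
  simp [MvSubst2, coeff, wt, Algebra.algebraMap_self]
  rfl

lemma ps_coeff_eq (n : ℕ) (x : PowerSeries R) :
    PowerSeries.coeff n x = MvPowerSeries.coeff (Finsupp.single () n) x := rfl

lemma unit_finsupp_eq (e : Unit →₀ ℕ) : e = Finsupp.single () (e ()) := by
  refine Finsupp.ext fun j => ?_
  cases j
  simp

lemma PSsubst_eq (a : MvPowerSeries σ R) (f : PowerSeries R) :
    PSsubst a f = SubstAux (fun _ : Unit => a) f := by
  ext d
  rw [coeff_PSsubst, coeff_SubstAux]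
  refine Finset.sum_nbij' (fun n => Finsupp.single () n) (fun e => e ()) ?_ ?_ ?_ ?_ ?_
  · intro n hn
    rw [Finset.mem_range] at hn
    rw [Finset.mem_Iic, le_cbound]
    intro i
    simp only [Finsupp.single_eq_same]
    omega
  · intro e he
    rw [Finset.mem_Iic, le_cbound] at he
    simpa using Nat.lt_succ_of_le (he ())
  · intro n _; simp
  · intro e _; exact (unit_finsupp_eq e).symm
  · intro n _
    have h : (∏ i : Unit, a ^ (Finsupp.single () n) i) = a ^ n := by simp
    show _ = _ * coeff d (∏ i : Unit, a ^ (Finsupp.single () n) i)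
    rw [h]
    rfl

lemma fin2_finsupp_eq (e : Fin 2 →₀ ℕ) :
    e = Finsupp.single 0 (e 0) + Finsupp.single 1 (e 1) := by
  ext j
  fin_cases j <;> simp [Finsupp.single_apply]

@[simp] lemma fin2_pair_apply_zero (m n : ℕ) :
    (Finsupp.single (0 : Fin 2) m + Finsupp.single 1 n : Fin 2 →₀ ℕ) 0 = m := by
  simp [Finsupp.single_apply]

@[simp] lemma fin2_pair_apply_one (m n : ℕ) :
    (Finsupp.single (0 : Fin 2) m + Finsupp.single 1 n : Fin 2 →₀ ℕ) 1 = n := by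
  simp [Finsupp.single_apply]

lemma MvSubst2_eq (a b : MvPowerSeries σ R) (F : MvPowerSeries (Fin 2) R) :
    MvSubst2 a b F = SubstAux ![a, b] F := by
  ext d
  rw [coeff_MvSubst2, coeff_SubstAux]
  refine Finset.sum_nbij'
    (fun mn => Finsupp.single 0 mn.1 + Finsupp.single 1 mn.2) (fun e => (e 0, e 1)) ?_ ?_ ?_ ?_ ?_
  · intro mn hmn
    rw [Finset.mem_product, Finset.mem_range, Finset.mem_range] at hmn
    rw [Finset.mem_Iic, le_cbound]
    intro i
    fin_cases i
    · simpa using Nat.lt_succ_iff.mp hmn.1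
    · simpa using Nat.lt_succ_iff.mp hmn.2
  · intro e he
    rw [Finset.mem_Iic, le_cbound] at he
    rw [Finset.mem_product, Finset.mem_range, Finset.mem_range]
    exact ⟨by have := he 0; simpa using Nat.lt_succ_of_le (by simpa using this),
      by have := he 1; simpa using Nat.lt_succ_of_le (by simpa using this)⟩
  · intro mn _
    simp
  · intro e _
    exact (fin2_finsupp_eq e).symm
  · intro mn _
    congr 1
    rw [Fin.prod_univ_two]
    simp


-- NEW
lemma matrix_const {a b : MvPowerSeries σ R} (ha : constantCoeff a = 0)
    (hb : constantCoeff b = 0) : ∀ i : Fin 2, constantCoeff (![a, b] i) = 0 := by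
  intro i; fin_cases i <;> simpa

lemma ps_constantCoeff_eq (x : PowerSeries R) :
    PowerSeries.constantCoeff x = MvPowerSeries.constantCoeff x := rfl

lemma PSsubst_comp {w : MvPowerSeries σ R} {v : PowerSeries R} (hw : constantCoeff w = 0)
    (hv : PowerSeries.constantCoeff v = 0) (u : PowerSeries R) :
    PSsubst w (PSsubst v u) = PSsubst (PSsubst w v) u := by
  rw [PSsubst_eq w, PSsubst_eq (v : MvPowerSeries Unit R) u,
    SubstAux_assoc (fun _ => hw) (fun _ => hv), PSsubst_eq (PSsubst w v) u]
  have harg : (fun _ : Unit => SubstAux (fun _ : Unit => w) v) = fun _ : Unit => PSsubst w v := by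
    funext i; exact (PSsubst_eq w v).symm
  rw [harg]

lemma PSsubst_MvSubst2 {w : MvPowerSeries σ R} {a b : MvPowerSeries Unit R}
    (hw : constantCoeff w = 0) (ha : constantCoeff a = 0)
    (hb : constantCoeff b = 0) (F : MvPowerSeries (Fin 2) R) :
    PSsubst w (MvSubst2 a b F) = MvSubst2 (PSsubst w a) (PSsubst w b) F := by
  rw [MvSubst2_eq a b F, PSsubst_eq, SubstAux_assoc (fun _ => hw) (matrix_const ha hb),
    MvSubst2_eq]
  have harg : (fun i => SubstAux (fun _ : Unit => w) (![a, b] i)) =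
      ![PSsubst w a, PSsubst w b] := by
    funext i; fin_cases i <;> simp [PSsubst_eq]
  rw [harg]

lemma MvSubst2_PSsubst {a b : MvPowerSeries σ R} (ha : constantCoeff a = 0)
    (hb : constantCoeff b = 0) {G : MvPowerSeries (Fin 2) R}
    (hG : constantCoeff G = 0) (u : PowerSeries R) :
    MvSubst2 a b (PSsubst G u) = PSsubst (MvSubst2 a b G) u := by
  rw [PSsubst_eq G u, MvSubst2_eq, SubstAux_assoc (matrix_const ha hb) (fun _ => hG),
    PSsubst_eq (MvSubst2 a b G) u]
  have harg : (fun _ : Unit => SubstAux ![a, b] G) = fun _ : Unit => MvSubst2 a b G := by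
    funext i; exact (MvSubst2_eq a b G).symm
  rw [harg]

lemma MvSubst2_MvSubst2 {a b : MvPowerSeries σ R} (ha : constantCoeff a = 0)
    (hb : constantCoeff b = 0) {u v : MvPowerSeries (Fin 2) R}
    (hu : constantCoeff u = 0) (hv : constantCoeff v = 0)
    (F : MvPowerSeries (Fin 2) R) :
    MvSubst2 a b (MvSubst2 u v F) = MvSubst2 (MvSubst2 a b u) (MvSubst2 a b v) F := by
  rw [MvSubst2_eq u v F, MvSubst2_eq a b, SubstAux_assoc (matrix_const ha hb) (matrix_const hu hv),
    MvSubst2_eq (MvSubst2 a b u) (MvSubst2 a b v) F]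
  have harg : (fun i => SubstAux ![a, b] (![u, v] i)) =
      ![MvSubst2 a b u, MvSubst2 a b v] := by
    funext i; fin_cases i <;> simp [MvSubst2_eq]
  rw [harg]

lemma PSsubst_X_right {a : MvPowerSeries σ R} (ha : constantCoeff a = 0) :
    PSsubst a (PowerSeries.X : PowerSeries R) = a := by
  rw [PSsubst_eq]
  exact SubstAux_X (fun _ => ha) ()

lemma PSsubst_X_left (f : PowerSeries R) :
    PSsubst (PowerSeries.X : MvPowerSeries Unit R) f = f := by
  rw [PSsubst_eq]
  have : (fun _ : Unit => (PowerSeries.X : MvPowerSeries Unit R)) = fun i : Unit => X i := by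
    funext i; cases i; rfl
  rw [this, SubstAux_X_self]

lemma MvSubst2_X0 {a b : MvPowerSeries σ R} (ha : constantCoeff a = 0)
    (hb : constantCoeff b = 0) : MvSubst2 a b (X 0 : MvPowerSeries (Fin 2) R) = a := by
  rw [MvSubst2_eq]
  simpa using SubstAux_X (matrix_const ha hb) 0

lemma MvSubst2_X1 {a b : MvPowerSeries σ R} (ha : constantCoeff a = 0)
    (hb : constantCoeff b = 0) : MvSubst2 a b (X 1 : MvPowerSeries (Fin 2) R) = b := by
  rw [MvSubst2_eq]
  simpa using SubstAux_X (matrix_const ha hb) 1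

lemma wt_zero : wt (0 : σ →₀ ℕ) = 0 := by simp [wt]

lemma constantCoeff_PSsubst (w : MvPowerSeries σ R) (u : PowerSeries R) :
    constantCoeff (PSsubst w u) = PowerSeries.constantCoeff u := by
  rw [← coeff_zero_eq_constantCoeff, coeff_PSsubst, wt_zero, Finset.sum_range_one]
  rw [pow_zero, coeff_one, if_pos rfl, mul_one, PowerSeries.coeff_zero_eq_constantCoeff]

lemma constantCoeff_MvSubst2 (a b : MvPowerSeries σ R) (F : MvPowerSeries (Fin 2) R) :
    constantCoeff (MvSubst2 a b F) = constantCoeff F := by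
  rw [← coeff_zero_eq_constantCoeff, coeff_MvSubst2, wt_zero]
  rw [show Finset.range (0 + 1) ×ˢ Finset.range (0 + 1) = {((0 : ℕ), (0 : ℕ))} from rfl]
  rw [Finset.sum_singleton]
  rw [pow_zero, pow_zero, one_mul, coeff_one, if_pos rfl, mul_one, Finsupp.single_zero,
    Finsupp.single_zero, add_zero, coeff_zero_eq_constantCoeff]

lemma coeff_one_PSsubst (w : MvPowerSeries Unit R) (u : PowerSeries R) :
    PowerSeries.coeff 1 (PSsubst w u) =
      PowerSeries.coeff 1 u * PowerSeries.coeff 1 w := by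
  rw [ps_coeff_eq, coeff_PSsubst, wt_single]
  rw [Finset.sum_range_succ, Finset.sum_range_one]
  have h0 : coeff (Finsupp.single () 1) ((w ^ 0 : MvPowerSeries Unit R)) = 0 := by
    rw [pow_zero, coeff_one, if_neg (by simp [Finsupp.single_eq_zero])]
  rw [h0, mul_zero, zero_add, pow_one]
  rfl

lemma coeff_one_MvSubst2 {a b : MvPowerSeries Unit R} (ha : constantCoeff a = 0)
    (hb : constantCoeff b = 0) (F : MvPowerSeries (Fin 2) R) :
    PowerSeries.coeff 1 (MvSubst2 a b F) =
      coeff (Finsupp.single 0 1) F * PowerSeries.coeff 1 a +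
      coeff (Finsupp.single 1 1) F * PowerSeries.coeff 1 b := by
  rw [ps_coeff_eq, coeff_MvSubst2, wt_single]
  rw [show Finset.range (1 + 1) ×ˢ Finset.range (1 + 1) =
    {((0:ℕ),(0:ℕ)), (0,1), (1,0), (1,1)} from rfl]
  rw [Finset.sum_insert (by decide), Finset.sum_insert (by decide),
    Finset.sum_insert (by decide), Finset.sum_singleton]
  have h00 : coeff (Finsupp.single () 1) ((a ^ 0 * b ^ 0 : MvPowerSeries Unit R)) = 0 := by
    rw [pow_zero, pow_zero, one_mul, coeff_one, if_neg (by simp [Finsupp.single_eq_zero])]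
  have h11 : coeff (Finsupp.single () 1) ((a ^ 1 * b ^ 1 : MvPowerSeries Unit R)) = 0 :=
    coeff_pow_mul_pow_eq_zero ha hb (by rw [wt_single]; omega)
  rw [h00, h11, mul_zero, mul_zero, zero_add, add_zero]
  simp only [pow_zero, pow_one, one_mul, mul_one, Finsupp.single_zero, zero_add, add_zero]
  rw [add_comm]
  rfl


-- NEW
lemma ps_coeff_pow_eq_zero {f : PowerSeries R} (hf : PowerSeries.constantCoeff f = 0)
    {j k : ℕ} (h : j < k) : PowerSeries.coeff j (f ^ k) = 0 := by
  rw [ps_coeff_eq]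
  exact coeff_pow_eq_zero hf (by rw [wt_single]; exact h)

lemma ps_coeff_pow_self {f : PowerSeries R} (hf : PowerSeries.constantCoeff f = 0) (m : ℕ) :
    PowerSeries.coeff m (f ^ m) = (PowerSeries.coeff 1 f) ^ m := by
  induction m with
  | zero => simp
  | succ m ih =>
    rw [pow_succ, PowerSeries.coeff_mul, Finset.sum_eq_single (m, 1)]
    · rw [ih, pow_succ]
    · rintro ⟨i, j⟩ hp hne
      rw [Finset.HasAntidiagonal.mem_antidiagonal] at hp
      simp only at hp ⊢
      rcases lt_trichotomy i m with h | h | h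
      · rw [ps_coeff_pow_eq_zero hf h, zero_mul]
      · exact absurd (Prod.ext_iff.mpr ⟨h, by omega⟩) hne
      · have hj : j = 0 := by omega
        rw [hj, PowerSeries.coeff_zero_eq_constantCoeff, hf, mul_zero]
    · intro h
      exact absurd (Finset.HasAntidiagonal.mem_antidiagonal.mpr (by omega)) h

lemma ps_pow_coeff_congr {g1 g2 : PowerSeries R} (h10 : PowerSeries.constantCoeff g1 = 0)
    (h20 : PowerSeries.constantCoeff g2 = 0) {m : ℕ}
    (hagree : ∀ j, j < m → PowerSeries.coeff j g1 = PowerSeries.coeff j g2) :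
    ∀ k j, j ≤ m → (2 ≤ k ∨ j < m) →
      PowerSeries.coeff j (g1 ^ k) = PowerSeries.coeff j (g2 ^ k) := by
  intro k
  induction k with
  | zero => intro j _ _; rfl
  | succ k ih =>
    intro j hj hcond
    rcases Nat.eq_zero_or_pos k with rfl | hk
    · rcases hcond with h2 | hlt
      · omega
      · rw [pow_one, pow_one]; exact hagree j hlt
    · rw [pow_succ, pow_succ, PowerSeries.coeff_mul, PowerSeries.coeff_mul]
      refine Finset.sum_congr rfl fun p hp => ?_
      rw [Finset.HasAntidiagonal.mem_antidiagonal] at hp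
      rcases Nat.eq_zero_or_pos p.2 with hq0 | hq
      · rw [hq0, PowerSeries.coeff_zero_eq_constantCoeff, h10, h20, mul_zero, mul_zero]
      · have e1 : PowerSeries.coeff p.1 (g1 ^ k) = PowerSeries.coeff p.1 (g2 ^ k) :=
          ih p.1 (by omega) (Or.inr (by omega))
        rcases lt_or_ge p.2 m with hlt | hge
        · rw [e1, hagree p.2 hlt]
        · have hp10 : p.1 = 0 := by omega
          rw [hp10, ps_coeff_pow_eq_zero h10 hk, ps_coeff_pow_eq_zero h20 hk, zero_mul,
            zero_mul]

lemma bracket_unique [IsDomain R] {f : PowerSeries R} {π : R}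
    (hf0 : PowerSeries.constantCoeff f = 0) (hf1 : PowerSeries.coeff 1 f = π)
    (hπ0 : π ≠ 0) (hπu : ¬ IsUnit π) {a : R} {g1 g2 : PowerSeries R}
    (hg10 : PowerSeries.constantCoeff g1 = 0) (hg11 : PowerSeries.coeff 1 g1 = a)
    (hc1 : PSsubst (f : MvPowerSeries Unit R) g1 = PSsubst (g1 : MvPowerSeries Unit R) f)
    (hg20 : PowerSeries.constantCoeff g2 = 0) (hg21 : PowerSeries.coeff 1 g2 = a)
    (hc2 : PSsubst (f : MvPowerSeries Unit R) g2 = PSsubst (g2 : MvPowerSeries Unit R) f) :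
    g1 = g2 := by
  ext m
  induction m using Nat.strong_induction_on with
  | _ m ih =>
  rcases m with _ | _ | m'
  · rw [PowerSeries.coeff_zero_eq_constantCoeff, hg10, hg20]
  · rw [hg11, hg21]
  set n := m' + 2 with hn
  have hagree : ∀ j, j < n → PowerSeries.coeff j g1 = PowerSeries.coeff j g2 :=
    fun j hj => ih j hj
  have key1 := congrArg (MvPowerSeries.coeff (Finsupp.single () n)) hc1
  have key2 := congrArg (MvPowerSeries.coeff (Finsupp.single () n)) hc2
  rw [coeff_PSsubst, coeff_PSsubst, wt_single] at key1 key2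
  simp only [← ps_coeff_eq] at key1 key2
  -- key1 : ∑ k ∈ range (n+1), coeff k g1 * coeff n (f^k) = ∑ k, coeff k f * coeff n (g1^k)
  set Δ := PowerSeries.coeff n g1 - PowerSeries.coeff n g2 with hΔ
  have hL : (∑ k ∈ Finset.range (n + 1), PowerSeries.coeff k g1 *
        PowerSeries.coeff n (f ^ k)) -
      (∑ k ∈ Finset.range (n + 1), PowerSeries.coeff k g2 *
        PowerSeries.coeff n (f ^ k)) = Δ * π ^ n := by
    rw [← Finset.sum_sub_distrib]
    have : ∀ k ∈ Finset.range (n + 1),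
        PowerSeries.coeff k g1 * PowerSeries.coeff n (f ^ k) -
          PowerSeries.coeff k g2 * PowerSeries.coeff n (f ^ k) =
        (PowerSeries.coeff k g1 - PowerSeries.coeff k g2) *
          PowerSeries.coeff n (f ^ k) := fun k _ => by ring
    rw [Finset.sum_congr rfl this, Finset.sum_range_succ]
    have hz : ∀ k ∈ Finset.range n,
        (PowerSeries.coeff k g1 - PowerSeries.coeff k g2) *
          PowerSeries.coeff n (f ^ k) = 0 := by
      intro k hk
      rw [Finset.mem_range] at hk
      rw [hagree k hk, sub_self, zero_mul]
    rw [Finset.sum_eq_zero hz, zero_add, ps_coeff_pow_self hf0, hf1]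
  have hR : (∑ k ∈ Finset.range (n + 1), PowerSeries.coeff k f *
        PowerSeries.coeff n (g1 ^ k)) -
      (∑ k ∈ Finset.range (n + 1), PowerSeries.coeff k f *
        PowerSeries.coeff n (g2 ^ k)) = π * Δ := by
    rw [← Finset.sum_sub_distrib]
    have step : ∀ k ∈ Finset.range (n + 1),
        PowerSeries.coeff k f * PowerSeries.coeff n (g1 ^ k) -
          PowerSeries.coeff k f * PowerSeries.coeff n (g2 ^ k) =
        PowerSeries.coeff k f *
          (PowerSeries.coeff n (g1 ^ k) - PowerSeries.coeff n (g2 ^ k)) := fun k _ => by ring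
    rw [Finset.sum_congr rfl step, Finset.sum_eq_single 1]
    · rw [pow_one, pow_one, hf1]
    · intro k _ hk1
      rcases Nat.eq_zero_or_pos k with rfl | hkpos
      · rw [pow_zero, pow_zero, sub_self, mul_zero]
      · have hk2 : 2 ≤ k := by omega
        rw [ps_pow_coeff_congr hg10 hg20 hagree k n le_rfl (Or.inl hk2), sub_self, mul_zero]
    · intro h
      exact absurd (Finset.mem_range.mpr (by omega)) h
  have hmain : Δ * π ^ n = π * Δ := by
    rw [← hL, ← hR, key1, key2]
  have hfactor : Δ * (π ^ n - π) = 0 := by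
    rw [mul_sub, hmain]; ring
  rcases mul_eq_zero.mp hfactor with h | h
  · have := sub_eq_zero.mp h
    exact this
  · exfalso
    have hππ : π * (π ^ (m' + 1) - 1) = 0 := by
      have hpow : π ^ n = π * π ^ (m' + 1) := by rw [hn, pow_succ']
      have := sub_eq_zero.mp h
      rw [mul_sub, mul_one, ← hpow, this, sub_self]
    rcases mul_eq_zero.mp hππ with h' | h'
    · exact hπ0 h'
    · have hone : π * π ^ m' = 1 := by
        rw [← pow_succ']
        exact sub_eq_zero.mp h'
      exact hπu (IsUnit.of_mul_eq_one (π ^ m') hone)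


lemma charZeroR (p : ℕ) [Fact p.Prime] (M : Type*) [Field M] [Algebra ℚ_[p] M] :
    CharZero (integralClosure ℤ_[p] M) := by
  have hM : CharZero M := charZero_of_injective_algebraMap (algebraMap ℚ_[p] M).injective
  constructor
  intro a b h
  have h2 : ((a : ℕ) : M) = ((b : ℕ) : M) := by
    have := congrArg (Subtype.val) h
    push_cast at this
    exact_mod_cast this
  exact_mod_cast h2

lemma pi_facts (p : ℕ) [Fact p.Prime] (M : Type*) [Field M] [Algebra ℚ_[p] M]
    [IsLocalRing (integralClosure ℤ_[p] M)]
    (q : ℕ) (hq : Nat.card (IsLocalRing.ResidueField (integralClosure ℤ_[p] M)) = q)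
    (π : integralClosure ℤ_[p] M)
    (hπ : IsLocalRing.maximalIdeal (integralClosure ℤ_[p] M) = Ideal.span {π})
    (f : PowerSeries (integralClosure ℤ_[p] M))
    (hf0 : PowerSeries.constantCoeff f = 0)
    (hfq : ∀ n : ℕ, PowerSeries.coeff n f - PowerSeries.coeff n (PowerSeries.X ^ q) ∈
      IsLocalRing.maximalIdeal (integralClosure ℤ_[p] M)) :
    π ≠ 0 ∧ ¬ IsUnit π := by
  constructor
  · intro h0
    subst h0
    have hbot : IsLocalRing.maximalIdeal (integralClosure ℤ_[p] M) = ⊥ := by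
      rw [hπ, Ideal.span_singleton_eq_bot]
    have hinj : Function.Injective
        (Ideal.Quotient.mk (IsLocalRing.maximalIdeal (integralClosure ℤ_[p] M))) := by
      intro x y hxy
      have h1 : x - y ∈ IsLocalRing.maximalIdeal (integralClosure ℤ_[p] M) :=
        Ideal.Quotient.eq.mp hxy
      rw [hbot] at h1
      exact sub_eq_zero.mp (Ideal.mem_bot.mp h1)
    have : CharZero (integralClosure ℤ_[p] M) := charZeroR p M
    have hinfR : Infinite (integralClosure ℤ_[p] M) := Infinite.of_injective _ Nat.cast_injective
    have hinf : Infinite (IsLocalRing.ResidueField (integralClosure ℤ_[p] M)) :=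
      Infinite.of_injective _ hinj
    have hq0 : q = 0 := by rw [← hq]; exact Nat.card_eq_zero_of_infinite
    have h0 := hfq 0
    rw [hq0, pow_zero, hbot] at h0
    have hco : PowerSeries.coeff 0 (1 : PowerSeries (integralClosure ℤ_[p] M)) = 1 := by
      simp
    rw [hco, PowerSeries.coeff_zero_eq_constantCoeff, hf0] at h0
    have h1 := Ideal.mem_bot.mp h0
    rw [zero_sub, neg_eq_zero] at h1
    exact one_ne_zero h1
  · intro hu
    have hmem : π ∈ IsLocalRing.maximalIdeal (integralClosure ℤ_[p] M) := by
      rw [hπ]; exact Ideal.mem_span_singleton_self π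
    exact (IsLocalRing.mem_maximalIdeal π).mp hmem hu


end LT3
end LT3Aux

/-- for `f ∈ F_π`, the map `a ↦ [a]_f` from `𝒪_M` to endomorphisms of `F_f` is an
injective ring homomorphism: `[a+b]_f(X) = F_f([a]_f(X),[b]_f(X))`, `[ab]_f = [a]_f ∘ [b]_f`,
`[1]_f(X) = X`, `[π]_f = f`, and `[a]_f = [b]_f → a = b`. -/
theorem statement3 (p : ℕ) [Fact p.Prime] (M : Type*) [Field M] [Algebra ℚ_[p] M]
    [FiniteDimensional ℚ_[p] M] [IsLocalRing (integralClosure ℤ_[p] M)]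
    (q : ℕ) (hq : Nat.card (IsLocalRing.ResidueField (integralClosure ℤ_[p] M)) = q)
    (π : integralClosure ℤ_[p] M)
    (hπ : IsLocalRing.maximalIdeal (integralClosure ℤ_[p] M) = Ideal.span {π})
    (f : PowerSeries (integralClosure ℤ_[p] M))
    (hf : IsLubinTateSeries (IsLocalRing.maximalIdeal (integralClosure ℤ_[p] M)) π q f)
    (F : MvPowerSeries (Fin 2) (integralClosure ℤ_[p] M))
    (hFf : IsFormalGroupLaw F ∧ IsEndoOf f F) :
    (∀ (a b : integralClosure ℤ_[p] M)
        (ha hb hab : PowerSeries (integralClosure ℤ_[p] M)),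
        IsLTBracket f a ha → IsLTBracket f b hb → IsLTBracket f (a + b) hab →
        hab = MvSubst2 (ha : MvPowerSeries Unit (integralClosure ℤ_[p] M))
          (hb : MvPowerSeries Unit (integralClosure ℤ_[p] M)) F) ∧
    (∀ (a b : integralClosure ℤ_[p] M)
        (ha hb hab : PowerSeries (integralClosure ℤ_[p] M)),
        IsLTBracket f a ha → IsLTBracket f b hb → IsLTBracket f (a * b) hab →
        hab = PSsubst (hb : MvPowerSeries Unit (integralClosure ℤ_[p] M)) ha) ∧
    (∀ h : PowerSeries (integralClosure ℤ_[p] M),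
        IsLTBracket f 1 h → h = PowerSeries.X) ∧
    (IsLTBracket f π f) ∧
    (∀ (a b : integralClosure ℤ_[p] M) (ha hb : PowerSeries (integralClosure ℤ_[p] M)),
        IsLTBracket f a ha → IsLTBracket f b hb → ha = hb → a = b) := by
  classical
  obtain ⟨hFG, hendo⟩ := hFf
  obtain ⟨hF0, hF10, hF01, -, -⟩ := hFG
  obtain ⟨hf0, hf1, hfq⟩ := hf
  obtain ⟨hπ0, hπu⟩ := LT3.pi_facts p M q hq π hπ f hf0 hfq
  refine ⟨?_, ?_, ?_, ⟨hf0, hf1, rfl⟩, ?_⟩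
  · -- addition
    rintro a b ha hb hab ⟨ha0, ha1, hac⟩ ⟨hb0, hb1, hbc⟩ h3
    refine LT3.bracket_unique hf0 hf1 hπ0 hπu h3.1 h3.2.1 h3.2.2 ?_ ?_ ?_
    · exact (LT3.constantCoeff_MvSubst2 ha hb F).trans hF0
    · rw [LT3.coeff_one_MvSubst2 ha0 hb0 F, hF10, hF01, ha1, hb1, one_mul, one_mul]
    · have hu0 : MvPowerSeries.constantCoeff
          (PSsubst (MvPowerSeries.X 0 : MvPowerSeries (Fin 2) (integralClosure ℤ_[p] M)) f) = 0 :=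
        (LT3.constantCoeff_PSsubst _ f).trans hf0
      have hv0 : MvPowerSeries.constantCoeff
          (PSsubst (MvPowerSeries.X 1 : MvPowerSeries (Fin 2) (integralClosure ℤ_[p] M)) f) = 0 :=
        (LT3.constantCoeff_PSsubst _ f).trans hf0
      have e3 : MvSubst2 (ha : MvPowerSeries Unit (integralClosure ℤ_[p] M)) hb
          (PSsubst (MvPowerSeries.X 0 : MvPowerSeries (Fin 2) (integralClosure ℤ_[p] M)) f) = PSsubst ha f := by
        rw [LT3.MvSubst2_PSsubst ha0 hb0 (MvPowerSeries.constantCoeff_X 0) f,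
          LT3.MvSubst2_X0 ha0 hb0]
      have e4 : MvSubst2 (ha : MvPowerSeries Unit (integralClosure ℤ_[p] M)) hb
          (PSsubst (MvPowerSeries.X 1 : MvPowerSeries (Fin 2) (integralClosure ℤ_[p] M)) f) = PSsubst hb f := by
        rw [LT3.MvSubst2_PSsubst ha0 hb0 (MvPowerSeries.constantCoeff_X 1) f,
          LT3.MvSubst2_X1 ha0 hb0]
      calc PSsubst (f : MvPowerSeries Unit (integralClosure ℤ_[p] M)) (MvSubst2 ha hb F)
          = MvSubst2 (PSsubst f ha) (PSsubst f hb) F :=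
            LT3.PSsubst_MvSubst2 hf0 ha0 hb0 F
        _ = MvSubst2 (PSsubst ha f) (PSsubst hb f) F := by rw [hac, hbc]
        _ = MvSubst2 (MvSubst2 ha hb (PSsubst (MvPowerSeries.X 0 : MvPowerSeries (Fin 2) (integralClosure ℤ_[p] M)) f))
              (MvSubst2 ha hb (PSsubst (MvPowerSeries.X 1 : MvPowerSeries (Fin 2) (integralClosure ℤ_[p] M)) f)) F := by rw [e3, e4]
        _ = MvSubst2 (ha : MvPowerSeries Unit (integralClosure ℤ_[p] M)) hb
              (MvSubst2 (PSsubst (MvPowerSeries.X 0 : MvPowerSeries (Fin 2) (integralClosure ℤ_[p] M)) f)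
                (PSsubst (MvPowerSeries.X 1 : MvPowerSeries (Fin 2) (integralClosure ℤ_[p] M)) f) F) :=
            (LT3.MvSubst2_MvSubst2 ha0 hb0 hu0 hv0 F).symm
        _ = MvSubst2 (ha : MvPowerSeries Unit (integralClosure ℤ_[p] M)) hb (PSsubst F f) := by rw [← hendo]
        _ = PSsubst (MvSubst2 (ha : MvPowerSeries Unit (integralClosure ℤ_[p] M)) hb F) f :=
            LT3.MvSubst2_PSsubst ha0 hb0 hF0 f
  · -- multiplication
    rintro a b ha hb hab ⟨ha0, ha1, hac⟩ ⟨hb0, hb1, hbc⟩ h3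
    refine LT3.bracket_unique hf0 hf1 hπ0 hπu h3.1 h3.2.1 h3.2.2 ?_ ?_ ?_
    · exact (LT3.constantCoeff_PSsubst (hb : MvPowerSeries Unit (integralClosure ℤ_[p] M)) ha).trans ha0
    · rw [LT3.coeff_one_PSsubst, ha1, hb1]
    · calc PSsubst (f : MvPowerSeries Unit (integralClosure ℤ_[p] M)) (PSsubst hb ha)
          = PSsubst (PSsubst f hb) ha := LT3.PSsubst_comp hf0 hb0 ha
        _ = PSsubst (PSsubst hb f) ha := by rw [hbc]
        _ = PSsubst (hb : MvPowerSeries Unit (integralClosure ℤ_[p] M)) (PSsubst f ha) :=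
            (LT3.PSsubst_comp hb0 hf0 ha).symm
        _ = PSsubst (hb : MvPowerSeries Unit (integralClosure ℤ_[p] M)) (PSsubst ha f) := by rw [hac]
        _ = PSsubst (PSsubst (hb : MvPowerSeries Unit (integralClosure ℤ_[p] M)) ha) f :=
            LT3.PSsubst_comp hb0 ha0 f
  · -- [1] = X
    intro h hh
    refine LT3.bracket_unique hf0 hf1 hπ0 hπu hh.1 hh.2.1 hh.2.2 ?_ ?_ ?_
    · exact PowerSeries.constantCoeff_X
    · exact PowerSeries.coeff_one_X
    · rw [LT3.PSsubst_X_right hf0, LT3.PSsubst_X_left f]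
  · -- injectivity
    rintro a b ha hb ⟨-, ha1, -⟩ ⟨-, hb1, -⟩ heq
    rw [← ha1, ← hb1, heq]
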